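/- arXiv:2502.20240 — 8 statements merged into one kernel-verified Lean document; each statement's English description precedes it below -/
import Mathlib

section
/- Under the admissibility constraints, for every H ∈ [0, 3/4] one has d̃ + H·c̃ ≤ p*. -/
/-- Binomial weight `w_k = (n choose k)·p_gen^k·(1 − p_gen)^(n−k)`. -/
noncomputable def wgt (n : ℕ) (p : ℝ) (k : ℕ) : ℝ :=
  (n.choose k : ℝ) * p ^ k * (1 - p) ^ (n - k)

/-- Aggregated coefficient, e.g. `ã = Σ_{k=1}^n a_k·w_k`. -/
noncomputable def agg (n : ℕ) (p : ℝ) (f : ℕ → ℝ) : ℝ :=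
  ∑ k ∈ Finset.Icc 1 n, f k * wgt n p k

/-- Admissibility constraints on the purification coefficients
`a_k, b_k, c_k, d_k` for `k = 1, …, n`. -/
def Admissible (n : ℕ) (a b c d : ℕ → ℝ) : Prop :=
  ∀ k ∈ Finset.Icc 1 n,
    (0 ≤ d k ∧ d k ≤ 1) ∧
    (-(4/3) * d k ≤ c k ∧ c k ≤ (4/3) * (1 - d k)) ∧
    (0 ≤ b k ∧ b k ≤ (3/4) * d k) ∧
    (-(4/3) * b k ≤ a k ∧ a k ≤ -(4/3) * b k + (3/4) * c k + d k)

/-- Under the admissibility constraints, for every `H ∈ [0, 3/4]`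
one has `d̃ + H·c̃ ≤ p*`. -/
theorem aggregated_dc_bound (n : ℕ) (hn : 1 ≤ n) (p : ℝ)
    (hp : p ∈ Set.Icc (0:ℝ) 1)
    (a b c d : ℕ → ℝ) (hadm : Admissible n a b c d) :
    ∀ H ∈ Set.Icc (0:ℝ) (3/4),
      agg n p d + H * agg n p c ≤ 1 - (1 - p) ^ n := by
  rintro H ⟨hH0, hH34⟩
  obtain ⟨hp0, hp1⟩ := hp
  have hw : ∀ k, 0 ≤ wgt n p k := by
    intro k
    unfold wgt
    exact mul_nonneg (mul_nonneg (by positivity) (pow_nonneg hp0 _)) (pow_nonneg (by linarith) _)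
  -- sum of weights over Icc 1 n equals 1 - (1-p)^n
  have hsum : ∑ k ∈ Finset.Icc 1 n, wgt n p k = 1 - (1 - p) ^ n := by
    have h1 : ∑ k ∈ Finset.range (n + 1), wgt n p k = 1 := by
      have := add_pow p (1 - p) n
      simp only [add_sub_cancel, one_pow] at this
      rw [this]
      apply Finset.sum_congr rfl
      intro k _
      unfold wgt
      ring
    have h2 : Finset.range (n + 1) = insert 0 (Finset.Icc 1 n) := by
      ext k
      simp [Nat.lt_succ_iff, Nat.one_le_iff_ne_zero]
      omega
    rw [h2, Finset.sum_insert (by simp)] at h1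
    have hw0 : wgt n p 0 = (1 - p) ^ n := by
      unfold wgt; simp
    rw [hw0] at h1
    linarith
  rw [← hsum]
  unfold agg
  rw [Finset.mul_sum, ← Finset.sum_add_distrib]
  apply Finset.sum_le_sum
  intro k hk
  obtain ⟨⟨hd0, hd1⟩, ⟨hc1, hc2⟩, _, _⟩ := hadm k hk
  have hwk := hw k
  have key : d k + H * c k ≤ 1 := by
    rcases le_or_gt 0 (c k) with hc | hc
    · nlinarith
    · nlinarith
  calc d k * wgt n p k + H * (c k * wgt n p k)
      = (d k + H * c k) * wgt n p k := by ring
    _ ≤ 1 * wgt n p k := by apply mul_le_mul_of_nonneg_right key hwk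
    _ = wgt n p k := one_mul _
end

section
/- Under the admissibility constraints, for every H ∈ [0, 3/4] one has p* − ã + H·c̃ ≥ 0. -/
/-- Under the admissibility constraints, for every `H ∈ [0, 3/4]`
one has `p* − ã + H·c̃ ≥ 0`. -/
theorem aggregated_ac_bound (n : ℕ) (hn : 1 ≤ n) (p : ℝ)
    (hp : p ∈ Set.Icc (0:ℝ) 1)
    (a b c d : ℕ → ℝ) (hadm : Admissible n a b c d) :
    ∀ H ∈ Set.Icc (0:ℝ) (3/4),
      0 ≤ (1 - (1 - p) ^ n) - agg n p a + H * agg n p c := by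
  intro H hH
  obtain ⟨hp0, hp1⟩ := hp
  obtain ⟨hH0, hH1⟩ := hH
  have hw : ∀ k, 0 ≤ wgt n p k := by
    intro k
    unfold wgt
    have h1 : (0:ℝ) ≤ 1 - p := by linarith
    positivity
  have hsum : ∑ k ∈ Finset.Icc 1 n, wgt n p k = 1 - (1 - p) ^ n := by
    have hrange : Finset.range (n + 1) = insert 0 (Finset.Icc 1 n) := by
      ext x
      simp [Finset.mem_range, Finset.mem_Icc]
      omega
    have hb : ∑ k ∈ Finset.range (n + 1), wgt n p k = 1 := by
      have h := add_pow p (1 - p) n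
      have h2 : ∑ k ∈ Finset.range (n + 1), wgt n p k = (p + (1 - p)) ^ n := by
        rw [h]
        apply Finset.sum_congr rfl
        intro k _
        unfold wgt
        ring
      rw [h2]
      norm_num
    rw [hrange, Finset.sum_insert (by simp)] at hb
    have h0 : wgt n p 0 = (1 - p) ^ n := by simp [wgt]
    rw [h0] at hb
    linarith
  have key : 0 ≤ ∑ k ∈ Finset.Icc 1 n, (1 - a k + H * c k) * wgt n p k := by
    apply Finset.sum_nonneg
    intro k hk
    obtain ⟨⟨hd0, hd1⟩, ⟨hc0, hc1⟩, ⟨hb0, hb1⟩, ⟨ha0, ha1⟩⟩ := hadm k hk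
    have : 0 ≤ 1 - a k + H * c k := by nlinarith
    exact mul_nonneg this (hw k)
  have expand : ∑ k ∈ Finset.Icc 1 n, (1 - a k + H * c k) * wgt n p k
      = (1 - (1 - p) ^ n) - agg n p a + H * agg n p c := by
    rw [← hsum]
    unfold agg
    rw [Finset.mul_sum, ← Finset.sum_sub_distrib, ← Finset.sum_add_distrib]
    apply Finset.sum_congr rfl
    intro k _
    ring
  linarith [expand ▸ key]
end

section
/- Under the admissibility constraints, (p*)² − p*·ã − p*·d̃ + ã·d̃ − b̃·c̃ ≥ 0; indeed this quantity is bounded below by (p* − (4/3)·b̃ − ã)·(p* − d̃), which is a product of two nonnegative factors. -/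
/-- Under the admissibility constraints,
`(p*)² − p*·ã − p*·d̃ + ã·d̃ − b̃·c̃ ≥ 0`; indeed this quantity is bounded below
by `(p* − (4/3)·b̃ − ã)·(p* − d̃)`, a product of two nonnegative factors. -/
theorem aggregated_delta_second_nonneg (n : ℕ) (hn : 1 ≤ n) (p : ℝ)
    (hp : p ∈ Set.Icc (0:ℝ) 1)
    (a b c d : ℕ → ℝ) (hadm : Admissible n a b c d) :
    (0 ≤ (1 - (1 - p) ^ n) - (4/3) * agg n p b - agg n p a) ∧
    (0 ≤ (1 - (1 - p) ^ n) - agg n p d) ∧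
    ((1 - (1 - p) ^ n) - (4/3) * agg n p b - agg n p a)
        * ((1 - (1 - p) ^ n) - agg n p d)
      ≤ (1 - (1 - p) ^ n) ^ 2 - (1 - (1 - p) ^ n) * agg n p a
        - (1 - (1 - p) ^ n) * agg n p d
        + agg n p a * agg n p d - agg n p b * agg n p c ∧
    0 ≤ (1 - (1 - p) ^ n) ^ 2 - (1 - (1 - p) ^ n) * agg n p a
        - (1 - (1 - p) ^ n) * agg n p d
        + agg n p a * agg n p d - agg n p b * agg n p c := by
  obtain ⟨hp0, hp1⟩ := hp
  have hw : ∀ k ∈ Finset.Icc 1 n, 0 ≤ wgt n p k := by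
    intro k hk
    unfold wgt
    have h1p : (0:ℝ) ≤ 1 - p := by linarith
    positivity
  -- sum of weights equals 1 - (1-p)^n
  have hS : ∑ k ∈ Finset.Icc 1 n, wgt n p k = 1 - (1 - p) ^ n := by
    have hbin : ∑ k ∈ Finset.range (n+1),
        p ^ k * (1 - p) ^ (n - k) * (n.choose k : ℝ) = 1 := by
      have := add_pow p (1 - p) n
      simpa using this.symm
    have hrange : ∑ k ∈ Finset.range (n+1), wgt n p k = 1 := by
      rw [← hbin]
      apply Finset.sum_congr rfl
      intro k _
      unfold wgt; ring
    have h0 : (0:ℕ) ∈ Finset.range (n+1) := by simp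
    have hins := Finset.add_sum_erase (Finset.range (n+1)) (wgt n p) h0
    have hIcc : (Finset.range (n+1)).erase 0 = Finset.Icc 1 n := by
      ext k
      simp only [Finset.mem_erase, Finset.mem_range, Finset.mem_Icc]
      omega
    have hw0 : wgt n p 0 = (1 - p) ^ n := by unfold wgt; simp
    rw [← hIcc]
    have : wgt n p 0 + ∑ k ∈ (Finset.range (n+1)).erase 0, wgt n p k = 1 := by
      rw [hins, hrange]
    linarith [this, hw0.symm ▸ this]
  -- aggregated inequalities
  have h1 : agg n p a + (4/3) * agg n p b ≤ 1 - (1 - p) ^ n := by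
    have hsum : agg n p a + (4/3) * agg n p b
        = ∑ k ∈ Finset.Icc 1 n, (a k + 4/3 * b k) * wgt n p k := by
      unfold agg
      rw [Finset.mul_sum, ← Finset.sum_add_distrib]
      apply Finset.sum_congr rfl
      intro k _; ring
    rw [hsum, ← hS]
    apply Finset.sum_le_sum
    intro k hk
    obtain ⟨⟨hd0, hd1⟩, ⟨hc1, hc2⟩, ⟨hb0, hb1⟩, ⟨ha1, ha2⟩⟩ := hadm k hk
    have hle : a k + 4/3 * b k ≤ 1 := by linarith
    calc (a k + 4/3 * b k) * wgt n p k ≤ 1 * wgt n p k :=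
          mul_le_mul_of_nonneg_right hle (hw k hk)
      _ = wgt n p k := one_mul _
  have h2 : agg n p d ≤ 1 - (1 - p) ^ n := by
    rw [← hS]
    unfold agg
    apply Finset.sum_le_sum
    intro k hk
    obtain ⟨⟨hd0, hd1⟩, _, _, _⟩ := hadm k hk
    calc d k * wgt n p k ≤ 1 * wgt n p k :=
          mul_le_mul_of_nonneg_right hd1 (hw k hk)
      _ = wgt n p k := one_mul _
  have h3 : 0 ≤ agg n p b := by
    unfold agg
    apply Finset.sum_nonneg
    intro k hk
    exact mul_nonneg (hadm k hk).2.2.1.1 (hw k hk)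
  have h4 : agg n p c ≤ 4/3 * (1 - (1 - p) ^ n) - 4/3 * agg n p d := by
    have hstep : agg n p c ≤ ∑ k ∈ Finset.Icc 1 n, (4/3 * (1 - d k)) * wgt n p k := by
      unfold agg
      apply Finset.sum_le_sum
      intro k hk
      exact mul_le_mul_of_nonneg_right (hadm k hk).2.1.2 (hw k hk)
    have heq : ∑ k ∈ Finset.Icc 1 n, (4/3 * (1 - d k)) * wgt n p k
        = 4/3 * (∑ k ∈ Finset.Icc 1 n, wgt n p k) - 4/3 * agg n p d := by
      unfold agg
      rw [Finset.mul_sum, Finset.mul_sum, ← Finset.sum_sub_distrib]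
      apply Finset.sum_congr rfl
      intro k _; ring
    rw [heq, hS] at hstep
    exact hstep
  have g1 : 0 ≤ (1 - (1 - p) ^ n) - (4/3) * agg n p b - agg n p a := by linarith
  have g2 : 0 ≤ (1 - (1 - p) ^ n) - agg n p d := by linarith
  have key : 0 ≤ agg n p b * (4/3 * (1 - (1 - p) ^ n) - 4/3 * agg n p d - agg n p c) :=
    mul_nonneg h3 (by linarith)
  have g3 : ((1 - (1 - p) ^ n) - (4/3) * agg n p b - agg n p a)
        * ((1 - (1 - p) ^ n) - agg n p d)
      ≤ (1 - (1 - p) ^ n) ^ 2 - (1 - (1 - p) ^ n) * agg n p a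
        - (1 - (1 - p) ^ n) * agg n p d
        + agg n p a * agg n p d - agg n p b * agg n p c := by nlinarith [key]
  exact ⟨g1, g2, g3, le_trans (mul_nonneg g1 g2) g3⟩
end

section
/- Under the admissibility constraints, ã·d̃ − b̃·c̃ ≤ d̃ ≤ p*. -/
lemma wgt_nonneg (n : ℕ) {p : ℝ} (hp : p ∈ Set.Icc (0:ℝ) 1) (k : ℕ) : 0 ≤ wgt n p k := by
  obtain ⟨h0, h1⟩ := hp
  exact mul_nonneg (mul_nonneg (by positivity) (pow_nonneg h0 _)) (pow_nonneg (by linarith) _)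

lemma agg_mono {n : ℕ} {p : ℝ} (hp : p ∈ Set.Icc (0:ℝ) 1) {f g : ℕ → ℝ}
    (h : ∀ k ∈ Finset.Icc 1 n, f k ≤ g k) : agg n p f ≤ agg n p g :=
  Finset.sum_le_sum fun k hk => mul_le_mul_of_nonneg_right (h k hk) (wgt_nonneg n hp k)

lemma agg_one (n : ℕ) (p : ℝ) : agg n p (fun _ => 1) = 1 - (1 - p) ^ n := by
  have hins : insert 0 (Finset.Icc 1 n) = Finset.range (n + 1) := by
    ext x; simp; omega
  have h0 : (0:ℕ) ∉ Finset.Icc 1 n := by simp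
  have hpow := add_pow p (1 - p) n
  rw [show p + (1 - p) = 1 by ring, one_pow] at hpow
  have hsum : ∑ k ∈ Finset.range (n + 1), wgt n p k = 1 := by
    rw [hpow]
    apply Finset.sum_congr rfl
    intro k _
    unfold wgt
    ring
  rw [← hins, Finset.sum_insert h0] at hsum
  have hw0 : wgt n p 0 = (1 - p) ^ n := by unfold wgt; simp
  unfold agg
  simp only [one_mul]
  linarith [hsum, hw0.symm ▸ hsum]

/-- Under the admissibility constraints,
`ã·d̃ − b̃·c̃ ≤ d̃ ≤ p*`. -/
theorem aggregated_ad_bc_bound (n : ℕ) (hn : 1 ≤ n) (p : ℝ)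
    (hp : p ∈ Set.Icc (0:ℝ) 1)
    (a b c d : ℕ → ℝ) (hadm : Admissible n a b c d) :
    agg n p a * agg n p d - agg n p b * agg n p c ≤ agg n p d ∧
    agg n p d ≤ 1 - (1 - p) ^ n := by
  have hpow : (0:ℝ) ≤ (1 - p) ^ n := pow_nonneg (by linarith [hp.2]) n
  have hlin : ∀ (x y z : ℝ) (f g h : ℕ → ℝ),
      agg n p (fun k => x * f k + y * g k + z * h k)
        = x * agg n p f + y * agg n p g + z * agg n p h := by
    intro x y z f g h
    simp [agg, Finset.mul_sum, ← Finset.sum_add_distrib, add_mul, mul_assoc]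
  -- basic aggregated facts
  have hD0 : 0 ≤ agg n p d := by
    unfold agg
    exact Finset.sum_nonneg fun k hk => mul_nonneg (hadm k hk).1.1 (wgt_nonneg n hp k)
  have hB0 : 0 ≤ agg n p b := by
    unfold agg
    exact Finset.sum_nonneg fun k hk => mul_nonneg (hadm k hk).2.2.1.1 (wgt_nonneg n hp k)
  have hDle : agg n p d ≤ 1 - (1 - p) ^ n := by
    calc agg n p d ≤ agg n p (fun _ => 1) :=
          agg_mono hp fun k hk => (hadm k hk).1.2
      _ = 1 - (1 - p) ^ n := agg_one n p
  have hCD : 0 ≤ agg n p c + (4/3) * agg n p d := by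
    have h1 : agg n p (fun _ => 0) ≤ agg n p (fun k => c k + (4/3) * d k) :=
      agg_mono hp fun k hk => by nlinarith [(hadm k hk).2.1.1]
    have h2 : agg n p (fun _ => 0) = 0 := by simp [agg]
    have h3 : agg n p (fun k => c k + (4/3) * d k) = agg n p c + (4/3) * agg n p d := by
      have := hlin 1 (4/3) 0 c d d
      simpa using this
    linarith
  have hA : agg n p a ≤ -(4/3) * agg n p b + (3/4) * agg n p c + agg n p d := by
    have h1 : agg n p a ≤ agg n p (fun k => -(4/3) * b k + (3/4) * c k + 1 * d k) :=
      agg_mono hp fun k hk => by linarith [(hadm k hk).2.2.2.2]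
    have h2 := hlin (-(4/3)) (3/4) 1 b c d
    rw [h2] at h1
    linarith
  have hCD1 : (3/4) * agg n p c + agg n p d ≤ 1 := by
    have h1 : agg n p (fun k => 0 * b k + (3/4) * c k + 1 * d k) ≤ agg n p (fun _ => 1) :=
      agg_mono hp fun k hk => by nlinarith [(hadm k hk).2.1.2]
    rw [hlin, agg_one] at h1
    nlinarith
  refine ⟨?_, hDle⟩
  set A := agg n p a
  set B := agg n p b
  set C := agg n p c
  set D := agg n p d
  nlinarith [mul_nonneg hB0 hCD, mul_le_mul_of_nonneg_right hA hD0,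
    mul_le_mul_of_nonneg_right hCD1 hD0]
end

section
/- Under the admissibility constraints, for p_con ∈ [0,1], γ ≥ 0 and H ∈ [0, 3/4], one has δ + δ′ + δ″ ≤ (γ + p_con)·p_con + (1 − p_con)·(1 + γ + 2·p_con)·p* + 2·(1 − p_con)²·(p*)². -/
/-- Under the admissibility constraints, for `p_con ∈ [0,1]`,
`γ ≥ 0` and `H ∈ [0, 3/4]`, one has
`δ + δ′ + δ″ ≤ (γ + p_con)·p_con + (1 − p_con)·(1 + γ + 2·p_con)·p*
  + 2·(1 − p_con)²·(p*)²`. -/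
theorem Delta_upper_bound (n : ℕ) (hn : 1 ≤ n) (p : ℝ)
    (hp : p ∈ Set.Icc (0:ℝ) 1)
    (a b c d : ℕ → ℝ) (hadm : Admissible n a b c d)
    (pcon γ H : ℝ) (hpcon : pcon ∈ Set.Icc (0:ℝ) 1) (hγ : 0 ≤ γ)
    (hH : H ∈ Set.Icc (0:ℝ) (3/4))
    (P aa bb cc dd δ δ' δ'' : ℝ)
    (hP : P = 1 - (1 - p) ^ n)
    (haa : aa = agg n p a) (hbb : bb = agg n p b)
    (hcc : cc = agg n p c) (hdd : dd = agg n p d)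
    (hδ : δ = (γ + pcon) * pcon)
    (hδ' : δ' = (1 - pcon) * (γ * P + 2 * pcon * P - pcon * aa - (γ + pcon) * dd))
    (hδ'' : δ'' = (1 - pcon) ^ 2 * (P ^ 2 - P * aa - P * dd + aa * dd - bb * cc)) :
    δ + δ' + δ'' ≤ (γ + pcon) * pcon + (1 - pcon) * (1 + γ + 2 * pcon) * P
      + 2 * (1 - pcon) ^ 2 * P ^ 2 := by
  obtain ⟨hp0, hp1⟩ := hp
  obtain ⟨hpc0, hpc1⟩ := hpcon
  have hw : ∀ k ∈ Finset.Icc 1 n, 0 ≤ wgt n p k := by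
    intro k hk
    unfold wgt
    have h1 : (0:ℝ) ≤ 1 - p := by linarith
    positivity
  have hsum : ∑ k ∈ Finset.Icc 1 n, wgt n p k = P := by
    have h1 : (p + (1 - p)) ^ n = ∑ k ∈ Finset.range (n+1), wgt n p k := by
      rw [add_pow]
      apply Finset.sum_congr rfl
      intro k hk
      unfold wgt
      ring
    have h2 : Finset.range (n+1) = insert 0 (Finset.Icc 1 n) := by
      ext x; simp; omega
    have h3 : (0:ℕ) ∉ Finset.Icc 1 n := by simp
    rw [h2, Finset.sum_insert h3] at h1
    have h4 : wgt n p 0 = (1 - p) ^ n := by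
      unfold wgt; simp
    rw [h4] at h1
    have h5 : (p + (1 - p)) ^ n = 1 := by norm_num
    rw [hP]; linarith
  have hdd0 : 0 ≤ dd := by
    rw [hdd]
    apply Finset.sum_nonneg
    intro k hk
    exact mul_nonneg ((hadm k hk).1.1) (hw k hk)
  have hddP : dd ≤ P := by
    rw [hdd, ← hsum]
    apply Finset.sum_le_sum
    intro k hk
    nlinarith [(hadm k hk).1.1, (hadm k hk).1.2, hw k hk]
  have hmono : ∀ f g : ℕ → ℝ, (∀ k ∈ Finset.Icc 1 n, f k ≤ g k) → agg n p f ≤ agg n p g := by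
    intro f g h
    unfold agg
    apply Finset.sum_le_sum
    intro k hk
    exact mul_le_mul_of_nonneg_right (h k hk) (hw k hk)
  have haad : -dd ≤ aa := by
    have h1 : agg n p (fun k => -(d k)) ≤ agg n p a := by
      apply hmono
      intro k hk
      obtain ⟨⟨hd0, hd1⟩, hc, ⟨hb0, hb1⟩, ⟨ha0, ha1⟩⟩ := hadm k hk
      nlinarith
    have h2 : agg n p (fun k => -(d k)) = -agg n p d := by
      unfold agg; rw [← Finset.sum_neg_distrib]; apply Finset.sum_congr rfl; intros; ring
    rw [haa, hdd, ← h2]; exact h1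
  have hbb0 : 0 ≤ bb := by
    rw [hbb]
    apply Finset.sum_nonneg
    intro k hk
    exact mul_nonneg ((hadm k hk).2.2.1.1) (hw k hk)
  have hbbdd : bb ≤ 3/4 * dd := by
    have h1 : agg n p b ≤ agg n p (fun k => 3/4 * d k) := by
      apply hmono
      intro k hk
      linarith [(hadm k hk).2.2.1.2]
    have h2 : agg n p (fun k => 3/4 * d k) = 3/4 * agg n p d := by
      unfold agg; rw [Finset.mul_sum]; apply Finset.sum_congr rfl; intros; ring
    rw [hbb, hdd, ← h2]; exact h1
  have hccdd : -(4/3) * dd ≤ cc := by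
    have h1 : agg n p (fun k => -(4/3) * d k) ≤ agg n p c := by
      apply hmono
      intro k hk
      linarith [(hadm k hk).2.1.1]
    have h2 : agg n p (fun k => -(4/3) * d k) = -(4/3) * agg n p d := by
      unfold agg; rw [Finset.mul_sum]; apply Finset.sum_congr rfl; intros; ring
    rw [hcc, hdd, ← h2]; exact h1
  have hP0 : 0 ≤ P := by linarith
  have key1 : -(bb * cc) ≤ dd ^ 2 := by
    have e1 := mul_nonneg hbb0 (show (0:ℝ) ≤ cc + 4/3 * dd by linarith)
    have e2 := mul_nonneg hdd0 (show (0:ℝ) ≤ 3/4 * dd - bb by linarith)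
    linarith [e1, e2, hP0]
  have key2 : (P - aa) * (P - dd) ≤ (P + dd) * (P - dd) :=
    mul_le_mul_of_nonneg_right (by linarith) (by linarith)
  have h1pc : (0:ℝ) ≤ 1 - pcon := by linarith
  have hA : γ * P + 2 * pcon * P - pcon * aa - (γ + pcon) * dd ≤ (1 + γ + 2 * pcon) * P := by
    have e1 := mul_nonneg hpc0 (show (0:ℝ) ≤ dd + aa by linarith)
    have e2 := mul_nonneg hγ hdd0
    linarith [e1, e2, hP0]
  have hB : P ^ 2 - P * aa - P * dd + aa * dd - bb * cc ≤ 2 * P ^ 2 := by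
    linarith [key1, key2, sq_nonneg P]
  have hδ'le : δ' ≤ (1 - pcon) * ((1 + γ + 2 * pcon) * P) := by
    rw [hδ']; exact mul_le_mul_of_nonneg_left hA h1pc
  have hδ''le : δ'' ≤ (1 - pcon) ^ 2 * (2 * P ^ 2) := by
    rw [hδ'']; exact mul_le_mul_of_nonneg_left hB (sq_nonneg _)
  rw [hδ]
  linarith [hδ'le, hδ''le]
end

section
/- The availability of the 1GnB buffer is a non-increasing function of the purification probability: for all 0 ≤ q₁ ≤ q₂ ≤ 1, A(q₂) ≤ A(q₁). (Proposition 1 of the paper.) -/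
theorem sum_wgt (n : ℕ) (p : ℝ) :
    ∑ k ∈ Finset.Icc 1 n, wgt n p k = 1 - (1 - p) ^ n := by
  have h1 : (p + (1 - p)) ^ n = ∑ k ∈ Finset.range (n+1), wgt n p k := by
    rw [add_pow]
    exact Finset.sum_congr rfl fun k _ => by unfold wgt; ring
  have h2 : Finset.range (n+1) = insert 0 (Finset.Icc 1 n) := by
    ext k
    simp [Finset.mem_range, Finset.mem_insert, Finset.mem_Icc]
    omega
  rw [h2, Finset.sum_insert (by simp)] at h1
  have h0 : wgt n p 0 = (1 - p) ^ n := by simp [wgt]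
  have he : p + (1 - p) = 1 := by ring
  rw [he, one_pow, h0] at h1
  linarith

/-- Proposition 1: The availability of the 1GnB buffer is a
non-increasing function of the purification probability `q`. -/
theorem availability_antitone
    (n : ℕ) (hn : 1 ≤ n) (p : ℝ) (hp : p ∈ Set.Ioc (0:ℝ) 1)
    (a b c d : ℕ → ℝ) (hadm : Admissible n a b c d)
    (pcon Γ γ H : ℝ) (hpcon : pcon ∈ Set.Ioc (0:ℝ) 1) (hΓ : 0 ≤ Γ)
    (hγ : γ = Real.exp Γ - 1) (hH : H ∈ Set.Icc (0:ℝ) (3/4))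
    (P aa bb cc dd ε ε' δ δ' δ'' : ℝ)
    (hP : P = 1 - (1 - p) ^ n)
    (haa : aa = agg n p a) (hbb : bb = agg n p b)
    (hcc : cc = agg n p c) (hdd : dd = agg n p d)
    (hε : ε = γ + pcon)
    (hε' : ε' = (1 - pcon) * (P - aa + H * cc))
    (hδ : δ = (γ + pcon) * pcon)
    (hδ' : δ' = (1 - pcon) * (γ * P + 2 * pcon * P - pcon * aa - (γ + pcon) * dd))
    (hδ'' : δ'' = (1 - pcon) ^ 2 * (P ^ 2 - P * aa - P * dd + aa * dd - bb * cc))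
    (Eocc Av : ℝ → ℝ)
    (hE : ∀ q, Eocc q = (ε + ε' * q) / (δ + δ' * q + δ'' * q ^ 2))
    (hA : ∀ q, Av q = P * Eocc q / (1 + P * Eocc q))
    : ∀ q₁ q₂ : ℝ, 0 ≤ q₁ → q₁ ≤ q₂ → q₂ ≤ 1 → Av q₂ ≤ Av q₁ := by
  obtain ⟨hp0, hp1⟩ := hp
  obtain ⟨hpc0, hpc1⟩ := hpcon
  obtain ⟨hH0, hH1⟩ := hH
  have hγ0 : 0 ≤ γ := by
    have := Real.one_le_exp hΓ
    rw [hγ]; linarith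
  have hw : ∀ k, 0 ≤ wgt n p k := fun k =>
    mul_nonneg (mul_nonneg (by positivity) (pow_nonneg hp0.le k)) (pow_nonneg (by linarith) _)
  have hPsum : P = ∑ k ∈ Finset.Icc 1 n, wgt n p k := by rw [hP, sum_wgt n p]
  have hPpos : 0 < P := by
    have h1 : (1 - p) ^ n < 1 := by
      apply pow_lt_one₀ (by linarith) (by linarith) (by omega)
    rw [hP]; linarith
  -- ε' ≥ 0
  have hε'0 : 0 ≤ ε' := by
    have hsum' : P - aa + H * cc = ∑ k ∈ Finset.Icc 1 n, (1 - a k + H * c k) * wgt n p k := by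
      rw [hPsum, haa, hcc]
      simp only [agg, Finset.mul_sum, ← Finset.sum_sub_distrib, ← Finset.sum_add_distrib]
      exact Finset.sum_congr rfl fun k _ => by ring
    rw [hε']
    apply mul_nonneg (by linarith)
    rw [hsum']
    apply Finset.sum_nonneg
    intro k hk
    obtain ⟨⟨hd0, hd1⟩, ⟨hc1, hc2⟩, ⟨hb0, hb1⟩, ⟨ha1, ha2⟩⟩ := hadm k hk
    apply mul_nonneg _ (hw k)
    linarith [mul_nonneg (by linarith : (0:ℝ) ≤ 3/4 - H) (by linarith : (0:ℝ) ≤ 4/3 * (1 - d k) - c k),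
      mul_nonneg hH0 (by linarith : (0:ℝ) ≤ 1 - d k)]
  -- δ' ≥ 0
  have hδ'0 : 0 ≤ δ' := by
    have hsum' : γ * P + 2 * pcon * P - pcon * aa - (γ + pcon) * dd
        = ∑ k ∈ Finset.Icc 1 n, (γ + 2 * pcon - pcon * a k - (γ + pcon) * d k) * wgt n p k := by
      rw [hPsum, haa, hdd]
      simp only [agg, Finset.mul_sum, ← Finset.sum_sub_distrib, ← Finset.sum_add_distrib]
      exact Finset.sum_congr rfl fun k _ => by ring
    rw [hδ']
    apply mul_nonneg (by linarith)
    rw [hsum']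
    apply Finset.sum_nonneg
    intro k hk
    obtain ⟨⟨hd0, hd1⟩, ⟨hc1, hc2⟩, ⟨hb0, hb1⟩, ⟨ha1, ha2⟩⟩ := hadm k hk
    apply mul_nonneg _ (hw k)
    have hA1 : a k ≤ 1 := by linarith
    linarith [mul_nonneg hγ0 (by linarith : (0:ℝ) ≤ 1 - d k),
      mul_nonneg hpc0.le (by linarith : (0:ℝ) ≤ 1 - d k),
      mul_nonneg hpc0.le (by linarith : (0:ℝ) ≤ 1 - a k)]
  -- key: ε δ' ≥ ε' δ
  have hkey : 0 ≤ ε * δ' - ε' * δ := by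
    have hK : 0 ≤ (γ + pcon) * (P - dd) - pcon * H * cc := by
      have hsum' : (γ + pcon) * (P - dd) - pcon * H * cc
          = ∑ k ∈ Finset.Icc 1 n, ((γ + pcon) * (1 - d k) - pcon * H * c k) * wgt n p k := by
        rw [hPsum, hdd, hcc]
        simp only [agg, Finset.mul_sum, ← Finset.sum_sub_distrib, ← Finset.sum_add_distrib]
        exact Finset.sum_congr rfl fun k _ => by ring
      rw [hsum']
      apply Finset.sum_nonneg
      intro k hk
      obtain ⟨⟨hd0, hd1⟩, ⟨hc1, hc2⟩, ⟨hb0, hb1⟩, ⟨ha1, ha2⟩⟩ := hadm k hk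
      apply mul_nonneg _ (hw k)
      linarith [mul_nonneg (mul_nonneg hpc0.le hH0) (by linarith : (0:ℝ) ≤ 4/3 * (1 - d k) - c k),
        mul_nonneg hγ0 (by linarith : (0:ℝ) ≤ 1 - d k),
        mul_nonneg (mul_nonneg hpc0.le (by linarith : (0:ℝ) ≤ 3/4 - H))
          (by linarith : (0:ℝ) ≤ 1 - d k)]
    have hfac : ε * δ' - ε' * δ
        = ((γ + pcon) * (1 - pcon)) * ((γ + pcon) * (P - dd) - pcon * H * cc) := by
      rw [hε, hε', hδ, hδ']; ring
    rw [hfac]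
    exact mul_nonneg (mul_nonneg (by linarith) (by linarith)) hK
  -- δ'' ≥ 0
  have hδ''0 : 0 ≤ δ'' := by
    have hPa : P - aa = ∑ k ∈ Finset.Icc 1 n, (1 - a k) * wgt n p k := by
      rw [hPsum, haa]
      simp only [agg, ← Finset.sum_sub_distrib]
      exact Finset.sum_congr rfl fun k _ => by ring
    have hPd : P - dd = ∑ k ∈ Finset.Icc 1 n, (1 - d k) * wgt n p k := by
      rw [hPsum, hdd]
      simp only [agg, ← Finset.sum_sub_distrib]
      exact Finset.sum_congr rfl fun k _ => by ring
    have hprod : bb * cc ≤ (P - aa) * (P - dd) := by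
      rw [hPa, hPd, hbb, hcc]
      simp only [agg]
      rw [Finset.sum_mul_sum, Finset.sum_mul_sum]
      apply Finset.sum_le_sum
      intro i hi
      apply Finset.sum_le_sum
      intro j hj
      obtain ⟨⟨hdi0, hdi1⟩, ⟨hci1, hci2⟩, ⟨hbi0, hbi1⟩, ⟨hai1, hai2⟩⟩ := hadm i hi
      obtain ⟨⟨hdj0, hdj1⟩, ⟨hcj1, hcj2⟩, ⟨hbj0, hbj1⟩, ⟨haj1, haj2⟩⟩ := hadm j hj
      have h1 : 4/3 * b i ≤ 1 - a i := by linarith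
      have h2 : b i * c j ≤ (1 - a i) * (1 - d j) := by
        linarith [mul_nonneg hbi0 (by linarith : (0:ℝ) ≤ 4/3 * (1 - d j) - c j),
          mul_nonneg (by linarith : (0:ℝ) ≤ (1 - a i) - 4/3 * b i)
            (by linarith : (0:ℝ) ≤ 1 - d j)]
      linarith [mul_le_mul_of_nonneg_left h2 (mul_nonneg (hw i) (hw j))]
    rw [hδ'']
    have : P ^ 2 - P * aa - P * dd + aa * dd - bb * cc = (P - aa) * (P - dd) - bb * cc := by
      ring
    rw [this]
    exact mul_nonneg (sq_nonneg _) (by linarith)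
  -- positivity
  have hεpos : 0 < ε := by rw [hε]; linarith
  have hδpos : 0 < δ := by rw [hδ]; exact mul_pos (by linarith) hpc0
  have hD : ∀ q : ℝ, 0 ≤ q → 0 < δ + δ' * q + δ'' * q ^ 2 := by
    intro q hq
    linarith [mul_nonneg hδ'0 hq, mul_nonneg hδ''0 (sq_nonneg q)]
  have hN : ∀ q : ℝ, 0 ≤ q → 0 < ε + ε' * q := by
    intro q hq
    linarith [mul_nonneg hε'0 hq]
  intro q₁ q₂ hq1 h12 hq2
  have hq2' : 0 ≤ q₂ := le_trans hq1 h12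
  have hND : (ε + ε' * q₂) * (δ + δ' * q₁ + δ'' * q₁ ^ 2)
      ≤ (ε + ε' * q₁) * (δ + δ' * q₂ + δ'' * q₂ ^ 2) := by
    linarith [mul_nonneg (sub_nonneg.2 h12) hkey,
      mul_nonneg (mul_nonneg hδ''0 hεpos.le)
        (mul_nonneg (sub_nonneg.2 h12) (add_nonneg hq1 hq2')),
      mul_nonneg (mul_nonneg hδ''0 hε'0)
        (mul_nonneg (mul_nonneg hq1 hq2') (sub_nonneg.2 h12))]
  have hE2 : Eocc q₂ ≤ Eocc q₁ := by
    rw [hE, hE, div_le_div_iff₀ (hD q₂ hq2') (hD q₁ hq1)]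
    exact hND
  have hEnn : ∀ q : ℝ, 0 ≤ q → 0 ≤ Eocc q := fun q hq => by
    rw [hE]; exact div_nonneg (hN q hq).le (hD q hq).le
  rw [hA, hA]
  have h1 : 0 < 1 + P * Eocc q₁ := by linarith [mul_nonneg hPpos.le (hEnn q₁ hq1)]
  have h2 : 0 < 1 + P * Eocc q₂ := by linarith [mul_nonneg hPpos.le (hEnn q₂ hq2')]
  rw [div_le_div_iff₀ h2 h1]
  linarith [mul_le_mul_of_nonneg_left hE2 hPpos.le]
end

section
/- For a deterministic purification policy, i.e. one with c_k = 0 and d_k = 1 for all k = 1, …, n, the availability of the 1GnB buffer equals the maximal value for every purification probability: A(q) = p*/(p* + p_con) for all q ∈ [0,1]. -/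
/-- For a deterministic purification policy (`c_k = 0` and
`d_k = 1` for all `k = 1, …, n`), the availability equals the maximal value
`p*/(p* + p_con)` for every purification probability `q ∈ [0,1]`. -/
theorem availability_deterministic_policy
    (n : ℕ) (hn : 1 ≤ n) (p : ℝ) (hp : p ∈ Set.Ioc (0:ℝ) 1)
    (a b c d : ℕ → ℝ) (hadm : Admissible n a b c d)
    (pcon Γ γ H : ℝ) (hpcon : pcon ∈ Set.Ioc (0:ℝ) 1) (hΓ : 0 ≤ Γ)
    (hγ : γ = Real.exp Γ - 1) (hH : H ∈ Set.Icc (0:ℝ) (3/4))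
    (P aa bb cc dd ε ε' δ δ' δ'' : ℝ)
    (hP : P = 1 - (1 - p) ^ n)
    (haa : aa = agg n p a) (hbb : bb = agg n p b)
    (hcc : cc = agg n p c) (hdd : dd = agg n p d)
    (hε : ε = γ + pcon)
    (hε' : ε' = (1 - pcon) * (P - aa + H * cc))
    (hδ : δ = (γ + pcon) * pcon)
    (hδ' : δ' = (1 - pcon) * (γ * P + 2 * pcon * P - pcon * aa - (γ + pcon) * dd))
    (hδ'' : δ'' = (1 - pcon) ^ 2 * (P ^ 2 - P * aa - P * dd + aa * dd - bb * cc))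
    (Eocc Av : ℝ → ℝ)
    (hE : ∀ q, Eocc q = (ε + ε' * q) / (δ + δ' * q + δ'' * q ^ 2))
    (hA : ∀ q, Av q = P * Eocc q / (1 + P * Eocc q))
    (hdet : ∀ k ∈ Finset.Icc 1 n, c k = 0 ∧ d k = 1)
    : ∀ q ∈ Set.Icc (0:ℝ) 1, Av q = P / (P + pcon) := by
  obtain ⟨hp0, hp1⟩ := hp
  obtain ⟨hpc0, hpc1⟩ := hpcon
  have hγ0 : 0 ≤ γ := by
    rw [hγ]
    have := Real.one_le_exp hΓ
    linarith
  -- weights nonneg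
  have hw : ∀ k, 0 ≤ wgt n p k := by
    intro k
    unfold wgt
    apply mul_nonneg (mul_nonneg (by positivity) (by positivity))
    exact pow_nonneg (by linarith) _
  -- sum of weights over range (n+1) is 1
  have hsum1 : ∑ k ∈ Finset.range (n+1), wgt n p k = 1 := by
    have h := add_pow p (1 - p) n
    simp only [add_sub_cancel, one_pow] at h
    rw [show ∑ k ∈ Finset.range (n+1), wgt n p k
        = ∑ k ∈ Finset.range (n+1), p ^ k * (1-p) ^ (n-k) * (n.choose k : ℝ) by
      apply Finset.sum_congr rfl
      intro k _; unfold wgt; ring, ← h]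
  have hins : Finset.range (n+1) = insert 0 (Finset.Icc 1 n) := by
    ext k; simp [Nat.lt_succ_iff]; omega
  have hsumIcc : ∑ k ∈ Finset.Icc 1 n, wgt n p k = P := by
    have h0 : wgt n p 0 = (1 - p) ^ n := by simp [wgt]
    rw [hins, Finset.sum_insert (by simp)] at hsum1
    rw [hP]; linarith [hsum1, h0.symm ▸ hsum1]
  have hcc0 : cc = 0 := by
    rw [hcc]; unfold agg
    apply Finset.sum_eq_zero
    intro k hk
    rw [(hdet k hk).1]; ring
  have hddP : dd = P := by
    rw [hdd, ← hsumIcc]; unfold agg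
    apply Finset.sum_congr rfl
    intro k hk
    rw [(hdet k hk).2]; ring
  have haaP : aa ≤ P := by
    rw [haa, ← hsumIcc]; unfold agg
    apply Finset.sum_le_sum
    intro k hk
    have hadmk := hadm k hk
    have hdk := (hdet k hk).2
    have hck := (hdet k hk).1
    have : a k ≤ 1 := by
      have h1 := hadmk.2.2.2.2
      have h2 := hadmk.2.2.1.1
      rw [hdk, hck] at h1
      linarith
    calc a k * wgt n p k ≤ 1 * wgt n p k := mul_le_mul_of_nonneg_right this (hw k)
      _ = wgt n p k := one_mul _
  have hP0 : 0 < P := by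
    rw [hP]
    have h1 : (1 - p) ^ n < 1 := by
      apply pow_lt_one₀ (by linarith) (by linarith)
      omega
    linarith
  intro q hq
  obtain ⟨hq0, hq1⟩ := hq
  have hε'0 : 0 ≤ ε' := by
    rw [hε', hcc0]
    have : 0 ≤ P - aa := by linarith
    nlinarith
  have hS : 0 < ε + ε' * q := by
    rw [hε]
    have : 0 ≤ ε' * q := mul_nonneg hε'0 hq0
    linarith
  have hden : δ + δ' * q + δ'' * q ^ 2 = pcon * (ε + ε' * q) := by
    rw [hδ, hδ', hδ'', hε, hε', hcc0, hddP]
    ring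
  have hEq : Eocc q = 1 / pcon := by
    rw [hE q, hden]
    rw [mul_comm pcon, ← div_div, div_self (ne_of_gt hS)]
  rw [hA q, hEq]
  have hpc : pcon ≠ 0 := ne_of_gt hpc0
  have hPp : P + pcon ≠ 0 := by positivity
  field_simp
  ring
end

section
/- Assume the jump condition a_k·H + b_k ≥ H·(c_k·H + d_k) for all k = 1, …, n. Then for every q ∈ [0,1] the average consumed fidelity of the 1GnB buffer satisfies (γ + 4·F_new·p_con)/(4·γ + 4·p_con) ≤ F̄(q) ≤ (γ + 4·F_new·p_con + 3·(1 − p_con)·p*)/(4·γ + 4·p_con), and the lower bound is tight: F̄(0) = (γ/4 + F_new·p_con)/(γ + p_con). -/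
set_option maxHeartbeats 1600000 in
/-- Under the jump condition, for every `q ∈ [0,1]` the average
consumed fidelity satisfies
`(γ + 4·F_new·p_con)/(4γ + 4·p_con) ≤ F̄(q)
  ≤ (γ + 4·F_new·p_con + 3·(1 − p_con)·p*)/(4γ + 4·p_con)`,
and the lower bound is tight: `F̄(0) = (γ/4 + F_new·p_con)/(γ + p_con)`. -/
theorem avg_consumed_fidelity_bounds
    (n : ℕ) (hn : 1 ≤ n) (p : ℝ) (hp : p ∈ Set.Icc (0:ℝ) 1)
    (a b c d : ℕ → ℝ) (hadm : Admissible n a b c d)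
    (pcon Γ γ Fnew H : ℝ) (hpcon : pcon ∈ Set.Ioc (0:ℝ) 1) (hΓ : 0 ≤ Γ)
    (hγ : γ = Real.exp Γ - 1) (hFnew : Fnew ∈ Set.Icc (1/4 : ℝ) 1)
    (hH : H = Fnew - 1/4)
    (P aa bb cc dd : ℝ)
    (hP : P = 1 - (1 - p) ^ n)
    (haa : aa = agg n p a) (hbb : bb = agg n p b)
    (hcc : cc = agg n p c) (hdd : dd = agg n p d)
    (Fbar : ℝ → ℝ)
    (hF : ∀ q, Fbar q =
      ((pcon + q * (1 - pcon) * (P + cc / 4 - dd)) * Fnew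
        + (1/4) * (γ + q * (1 - pcon) * (-aa + 4 * bb - cc / 4 + dd)))
      / ((q * (1 - pcon) * cc) * Fnew
        + (γ + pcon + q * (1 - pcon) * (P - aa - cc / 4))))
    (hjump : ∀ k ∈ Finset.Icc 1 n, H * (c k * H + d k) ≤ a k * H + b k)
    : (∀ q ∈ Set.Icc (0:ℝ) 1,
        (γ + 4 * Fnew * pcon) / (4 * γ + 4 * pcon) ≤ Fbar q ∧
        Fbar q ≤ (γ + 4 * Fnew * pcon + 3 * (1 - pcon) * P) / (4 * γ + 4 * pcon)) ∧
      Fbar 0 = (γ / 4 + Fnew * pcon) / (γ + pcon) := by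
  obtain ⟨hp0, hp1⟩ := hp
  obtain ⟨hpcon0, hpcon1⟩ := hpcon
  obtain ⟨hF1, hF2⟩ := hFnew
  subst hH
  have hγ0 : 0 ≤ γ := by
    rw [hγ]; have := Real.one_le_exp hΓ; linarith
  have hH0 : (0:ℝ) ≤ Fnew - 1/4 := by linarith
  have hH34 : Fnew - 1/4 ≤ 3/4 := by linarith
  have h1p : 0 ≤ 1 - p := by linarith
  have hw : ∀ k ∈ Finset.Icc 1 n, 0 ≤ wgt n p k := by
    intro k _
    unfold wgt
    positivity
  have hsum : ∑ k ∈ Finset.Icc 1 n, wgt n p k = P := by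
    have hbin : ∑ k ∈ Finset.range (n+1), wgt n p k = 1 := by
      have h := add_pow p (1-p) n
      have h2 : ∑ k ∈ Finset.range (n+1), wgt n p k
          = ∑ k ∈ Finset.range (n+1), p ^ k * (1-p) ^ (n-k) * (n.choose k : ℝ) :=
        Finset.sum_congr rfl (fun k _ => by unfold wgt; ring)
      rw [h2, ← h]
      norm_num
    have hins : insert 0 (Finset.Icc 1 n) = Finset.range (n+1) := by
      ext k
      simp only [Finset.mem_insert, Finset.mem_Icc, Finset.mem_range, Nat.lt_succ_iff]
      omega
    have h0 : 0 ∉ Finset.Icc 1 n := by simp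
    have := Finset.sum_insert (f := wgt n p) h0
    rw [hins, hbin] at this
    have hw0 : wgt n p 0 = (1-p)^n := by unfold wgt; simp
    rw [hw0] at this
    linarith [this, hP]
  -- aggregated nonnegativity helper
  have haggpt : ∀ f : ℕ → ℝ, (∀ k ∈ Finset.Icc 1 n, 0 ≤ f k) →
      0 ≤ ∑ k ∈ Finset.Icc 1 n, f k * wgt n p k := by
    intro f hf
    exact Finset.sum_nonneg (fun k hk => mul_nonneg (hf k hk) (hw k hk))
  have hbb0 : 0 ≤ bb := by
    rw [hbb]; exact haggpt b (fun k hk => ((hadm k hk).2.2.1).1)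
  have hddP : dd ≤ P := by
    have : 0 ≤ ∑ k ∈ Finset.Icc 1 n, (1 - d k) * wgt n p k :=
      haggpt _ (fun k hk => by linarith [((hadm k hk).1).2])
    rw [Finset.sum_congr rfl (fun k (hk : k ∈ Finset.Icc 1 n) => by
      show (1 - d k) * wgt n p k = wgt n p k - d k * wgt n p k; ring),
      Finset.sum_sub_distrib, hsum] at this
    rw [hdd]; unfold agg; linarith
  have hbbdd : bb ≤ 3/4 * dd := by
    have : 0 ≤ ∑ k ∈ Finset.Icc 1 n, (3/4 * d k - b k) * wgt n p k :=
      haggpt _ (fun k hk => by linarith [((hadm k hk).2.2.1).2])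
    rw [Finset.sum_congr rfl (fun k (hk : k ∈ Finset.Icc 1 n) => by
      show (3/4 * d k - b k) * wgt n p k = 3/4 * (d k * wgt n p k) - b k * wgt n p k; ring),
      Finset.sum_sub_distrib, ← Finset.mul_sum] at this
    rw [hbb, hdd]; unfold agg; linarith
  have hP0 : 0 ≤ P := by
    rw [hP]
    have : (1-p)^n ≤ 1 := pow_le_one₀ h1p (by linarith)
    linarith
  -- E := cc*(Fnew-1/4) + P - aa ≥ 0
  have hE : 0 ≤ cc * (Fnew - 1/4) + P - aa := by
    have : 0 ≤ ∑ k ∈ Finset.Icc 1 n, (c k * (Fnew - 1/4) - a k + 1) * wgt n p k := by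
      apply haggpt
      intro k hk
      obtain ⟨⟨hd0, hd1⟩, ⟨hc0, hc1⟩, ⟨hb0, hb1⟩, ⟨ha0, ha1⟩⟩ := hadm k hk
      nlinarith [mul_nonneg (by linarith : (0:ℝ) ≤ 3/4 - (Fnew - 1/4))
        (by linarith : 0 ≤ (4/3) * (1 - d k) - c k),
        mul_nonneg hH0 (by linarith : 0 ≤ 1 - d k)]
    rw [Finset.sum_congr rfl (fun k (hk : k ∈ Finset.Icc 1 n) => by
      show (c k * (Fnew - 1/4) - a k + 1) * wgt n p k =
        (Fnew - 1/4) * (c k * wgt n p k) - a k * wgt n p k + wgt n p k; ring),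
      Finset.sum_add_distrib, Finset.sum_sub_distrib, ← Finset.mul_sum, hsum] at this
    rw [haa, hcc]; unfold agg; linarith
  -- J := aa*H + bb - H*(cc*H+dd) ≥ 0
  have hJ : 0 ≤ aa * (Fnew - 1/4) + bb - (Fnew - 1/4) * (cc * (Fnew - 1/4) + dd) := by
    have : 0 ≤ ∑ k ∈ Finset.Icc 1 n,
        (a k * (Fnew - 1/4) + b k - (Fnew - 1/4) * (c k * (Fnew - 1/4) + d k)) * wgt n p k := by
      apply haggpt
      intro k hk
      linarith [hjump k hk]
    rw [Finset.sum_congr rfl (fun k (hk : k ∈ Finset.Icc 1 n) => by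
      show (a k * (Fnew - 1/4) + b k - (Fnew - 1/4) * (c k * (Fnew - 1/4) + d k)) * wgt n p k =
        (Fnew - 1/4) * (a k * wgt n p k) + b k * wgt n p k
          - ((Fnew - 1/4) * (Fnew - 1/4) * (c k * wgt n p k)
            + (Fnew - 1/4) * (d k * wgt n p k)); ring),
      Finset.sum_sub_distrib, Finset.sum_add_distrib, Finset.sum_add_distrib,
      ← Finset.mul_sum, ← Finset.mul_sum, ← Finset.mul_sum] at this
    rw [haa, hbb, hcc, hdd]; unfold agg; nlinarith [this]
  have hS : 0 ≤ (P - dd) * (Fnew - 1/4) + bb :=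
    add_nonneg (mul_nonneg (by linarith) hH0) hbb0
  have hS34 : 4 * ((P - dd) * (Fnew - 1/4) + bb) ≤ 3 * P := by
    have hPd : 0 ≤ P - dd := by linarith
    have := mul_le_mul_of_nonneg_left hH34 hPd
    linarith
  have hden4 : 0 < 4 * γ + 4 * pcon := by linarith
  constructor
  · intro q ⟨hq0, hq1⟩
    have ht0 : 0 ≤ q * (1 - pcon) := mul_nonneg hq0 (by linarith)
    have ht1 : q * (1 - pcon) ≤ 1 - pcon := by nlinarith
    have hD : 0 < (q * (1 - pcon) * cc) * Fnew + (γ + pcon + q * (1 - pcon) * (P - aa - cc / 4)) := by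
      have hid : (q * (1 - pcon) * cc) * Fnew + (γ + pcon + q * (1 - pcon) * (P - aa - cc / 4))
          = γ + pcon + q * (1 - pcon) * (cc * (Fnew - 1/4) + P - aa) := by ring
      rw [hid]
      nlinarith [mul_nonneg ht0 hE]
    rw [hF q]
    constructor
    · rw [div_le_div_iff₀ hden4 hD]
      nlinarith [mul_nonneg (mul_nonneg hγ0 ht0) hS,
        mul_nonneg (mul_nonneg hpcon0.le ht0) hJ]
    · rw [div_le_div_iff₀ hD hden4]
      have hγp : (0:ℝ) ≤ γ + pcon := by linarith
      nlinarith [mul_nonneg (mul_nonneg (mul_nonneg hpcon0.le hH0) ht0) hE,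
        mul_nonneg (mul_nonneg (mul_nonneg (by linarith : (0:ℝ) ≤ 1 - pcon) hP0) ht0) hE,
        mul_nonneg (mul_nonneg hγp (by linarith : 0 ≤ 1 - pcon - q * (1 - pcon))) hP0,
        mul_nonneg (mul_nonneg hγp ht0) (by linarith : 0 ≤ 3 * P - 4 * ((P - dd) * (Fnew - 1/4) + bb))]
  · rw [hF 0]
    congr 1 <;> ring
end
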